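/- arXiv:math/0507561 — 4 statements merged into one kernel-verified Lean document; each statement's English description precedes it below -/
import Mathlib

section
/- Let p be a prime, X, Y ⊆ ℤ/pℤ, U a nonempty subset of Y, and i ≥ 1 an integer. If N_{i+1}^U(X,Y) ≠ ∅, then N_{i+1}^U(X,Y) − U ⊆ N_i^{⊆U}(X,Y); in particular |N_{i+1}^U(X,Y)| ≤ |N_i^{⊆U}(X,Y)| − |U| + 1. -/
open Pointwise

/-- The cardinality of the smallest arithmetic progression with difference `r`
containing `X`, i.e. the least `n` such that `X ⊆ {a, a+r, …, a+(n-1)r}` for some `a`. -/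
noncomputable def ell (p : ℕ) (r : ZMod p) (X : Finset (ZMod p)) : ℕ :=
  sInf {n : ℕ | ∃ a : ZMod p, X ⊆ (Finset.range n).image (fun i => a + (i : ℕ) • r)}

/-- `C` is an arithmetic progression of difference `d` in `ZMod p`. -/
def IsAP (p : ℕ) (d : ZMod p) (C : Finset (ZMod p)) : Prop :=
  ∃ a : ZMod p, ∃ n : ℕ, C = (Finset.range n).image (fun i => a + (i : ℕ) • d)

/-- `C` is a `d`-component of `Z`: a maximal arithmetic progression of
difference `d` contained in `Z`. -/
def IsComponent (p : ℕ) (d : ZMod p) (Z C : Finset (ZMod p)) : Prop :=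
  C.Nonempty ∧ IsAP p d C ∧ C ⊆ Z ∧
    ∀ C' : Finset (ZMod p), IsAP p d C' → C' ⊆ Z → C ⊆ C' → C' = C

/-- `c_d(Z)`, the number of `d`-components of `Z`. -/
noncomputable def numComponents (p : ℕ) (d : ZMod p) (Z : Finset (ZMod p)) : ℕ :=
  {C : Finset (ZMod p) | IsComponent p d Z C}.ncard

open Classical in
/-- The `k`-th isoperimetric number `κ_k(B)`, with the convention `min ∅ = p`. -/
noncomputable def kappa (p k : ℕ) (B : Finset (ZMod p)) : ℕ :=
  if ({n : ℕ | ∃ X : Finset (ZMod p),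
        k ≤ X.card ∧ (X + B).card ≤ p - k ∧ (X + B).card - X.card = n}).Nonempty then
    sInf {n : ℕ | ∃ X : Finset (ZMod p),
        k ≤ X.card ∧ (X + B).card ≤ p - k ∧ (X + B).card - X.card = n}
  else p

/-- `X` is a `k`-fragment of `B`. -/
def IsFragment (p k : ℕ) (B X : Finset (ZMod p)) : Prop :=
  k ≤ X.card ∧ (X + B).card ≤ p - k ∧ (X + B).card - X.card = kappa p k B

/-- `A` is a `k`-atom of `B`: a `k`-fragment of minimal cardinality. -/
def IsAtom' (p k : ℕ) (B A : Finset (ZMod p)) : Prop :=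
  IsFragment p k B A ∧ ∀ X : Finset (ZMod p), IsFragment p k B X → A.card ≤ X.card

/-- The `i`-fold sumset `iY = Y + ⋯ + Y`. -/
def itSum (p : ℕ) (Y : Finset (ZMod p)) : ℕ → Finset (ZMod p)
  | 0 => {0}
  | n + 1 => itSum p Y n + Y

/-- `N_i(X,Y)`: `N_0 = X`, and `N_i = (X + iY) \ (X + (i-1)Y)` for `i ≥ 1`. -/
def Nset (p : ℕ) (X Y : Finset (ZMod p)) : ℕ → Finset (ZMod p)
  | 0 => X
  | i + 1 => (X + itSum p Y (i + 1)) \ (X + itSum p Y i)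

/-- `N_i^U(X,Y)`: the elements `z ∈ N_i` with `z - U ⊆ N_{i-1}` and
`(z - (Y \ U)) ∩ N_{i-1} = ∅`. -/
def NsetU (p : ℕ) (X Y U : Finset (ZMod p)) (i : ℕ) : Finset (ZMod p) :=
  (Nset p X Y i).filter fun z =>
    (∀ u ∈ U, z - u ∈ Nset p X Y (i - 1)) ∧ ∀ y ∈ Y \ U, z - y ∉ Nset p X Y (i - 1)

/-- `N_i^{⊆U}(X,Y) = ⋃_{V ⊆ U} N_i^V(X,Y)`. -/
def NsetSub (p : ℕ) (X Y U : Finset (ZMod p)) (i : ℕ) : Finset (ZMod p) :=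
  U.powerset.biUnion fun V => NsetU p X Y V i


lemma Nset_subset_sum (p : ℕ) (X Y : Finset (ZMod p)) (j : ℕ) :
    Nset p X Y j ⊆ X + itSum p Y j := by
  cases j with
  | zero =>
    intro x hx
    have : x = x + (0 : ZMod p) := by ring
    rw [this]
    exact Finset.add_mem_add hx (Finset.mem_singleton_self 0)
  | succ n => exact Finset.sdiff_subset

lemma sum_step (p : ℕ) (X Y : Finset (ZMod p)) (j : ℕ) (a u : ZMod p) (hu : u ∈ Y)
    (ha : a ∈ X + itSum p Y j) : a + u ∈ X + itSum p Y (j+1) := by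
  show a + u ∈ X + (itSum p Y j + Y)
  rw [← add_assoc]
  exact Finset.add_mem_add ha hu

lemma NsetSub_subset (p : ℕ) (X Y U : Finset (ZMod p)) (i : ℕ) :
    NsetSub p X Y U i ⊆ Nset p X Y i := by
  intro x hx
  rw [NsetSub, Finset.mem_biUnion] at hx
  obtain ⟨V, -, hx⟩ := hx
  exact Finset.filter_subset _ _ hx

lemma main_subset (p : ℕ) (X Y U : Finset (ZMod p)) (hUY : U ⊆ Y) (j : ℕ) :
    NsetU p X Y U (j + 2) - U ⊆ NsetSub p X Y U (j + 1) := by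
  intro w hw
  rw [Finset.mem_sub] at hw
  obtain ⟨z, hz, u, hu, rfl⟩ := hw
  rw [NsetU, Finset.mem_filter] at hz
  obtain ⟨hzN, hz1, hz2⟩ := hz
  rw [NsetSub, Finset.mem_biUnion]
  refine ⟨U.filter (fun v => z - u - v ∈ Nset p X Y j), Finset.mem_powerset.2 (Finset.filter_subset _ _), ?_⟩
  rw [NsetU, Finset.mem_filter]
  refine ⟨hz1 u hu, fun v hv => (Finset.mem_filter.1 hv).2, ?_⟩
  intro y hy hmem
  rw [Finset.mem_sdiff] at hy
  by_cases hyU : y ∈ U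
  · exact hy.2 (Finset.mem_filter.2 ⟨hyU, hmem⟩)
  · have hzy : z - y ∉ Nset p X Y (j + 1) := hz2 y (Finset.mem_sdiff.2 ⟨hy.1, hyU⟩)
    have h1 : z - y ∈ X + itSum p Y (j + 1) := by
      have heq : z - y = (z - u - y) + u := by ring
      rw [heq]
      exact sum_step p X Y j _ u (hUY hu) (Nset_subset_sum p X Y j hmem)
    have h2 : z - y ∈ X + itSum p Y j := by
      by_contra h2
      exact hzy (Finset.mem_sdiff.2 ⟨h1, h2⟩)
    have h3 : z ∈ X + itSum p Y (j + 1) := by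
      have heq : z = (z - y) + y := by ring
      rw [heq]
      exact sum_step p X Y j _ y hy.1 h2
    have : z ∉ X + itSum p Y (j + 1) := (Finset.mem_sdiff.1 hzN).2
    exact this h3

lemma NsetU_subset_Nset (p : ℕ) (X Y U : Finset (ZMod p)) (i : ℕ) :
    NsetU p X Y U i ⊆ Nset p X Y i := by
  unfold NsetU; exact Finset.filter_subset _ _

theorem statement_3 (p : ℕ) (hp : p.Prime)
    (X Y U : Finset (ZMod p)) (hU : U.Nonempty) (hUY : U ⊆ Y)
    (i : ℕ) (hi : 1 ≤ i) (hne : (NsetU p X Y U (i + 1)).Nonempty) :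
    NsetU p X Y U (i + 1) - U ⊆ NsetSub p X Y U i ∧
      (NsetU p X Y U (i + 1)).card + U.card ≤ (NsetSub p X Y U i).card + 1 := by
  obtain ⟨j, rfl⟩ : ∃ j, i = j + 1 := ⟨i - 1, (Nat.succ_pred_eq_of_pos hi).symm⟩
  have hsub : NsetU p X Y U (j + 1 + 1) - U ⊆ NsetSub p X Y U (j + 1) :=
    main_subset p X Y U hUY j
  refine ⟨hsub, ?_⟩
  haveI : NeZero p := ⟨hp.pos.ne'⟩
  have hcd := ZMod.cauchy_davenport hp hne hU.neg
  rw [← sub_eq_add_neg, Finset.card_neg] at hcd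
  have hle : (NsetU p X Y U (j + 1 + 1) - U).card ≤ (NsetSub p X Y U (j + 1)).card :=
    Finset.card_le_card hsub
  rcases min_le_iff.1 hcd with h | h
  · exfalso
    obtain ⟨z, hz⟩ := hne
    have hcard : (NsetSub p X Y U (j + 1)).card = Fintype.card (ZMod p) :=
      le_antisymm (Finset.card_le_univ _) (by rw [ZMod.card]; exact h.trans hle)
    have huniv : NsetSub p X Y U (j + 1) = Finset.univ := Finset.eq_univ_of_card _ hcard
    have hzmem : z ∈ X + itSum p Y (j + 1) :=
      Nset_subset_sum p X Y (j + 1) (NsetSub_subset p X Y U (j + 1) (Finset.eq_univ_iff_forall.mp huniv z))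
    have hzN : z ∈ Nset p X Y (j + 1 + 1) := NsetU_subset_Nset p X Y U (j + 1 + 1) hz
    exact (Finset.mem_sdiff.1 hzN).2 hzmem
  · have h1 := hU.card_pos
    have h2 := hne.card_pos
    omega
end

section
/- Let p be a prime, let B ⊆ ℤ/pℤ contain 0 with |B| ≥ 3 (so that B generates ℤ/pℤ), and let A be a 2-atom of B containing 0 with |A| ≥ 3. Set A* = A \ {0}. Then for every integer i ≥ 1, N_{i+1}(B,A) − A* ⊆ N_i(B,A). -/
open Pointwise

section StatementFourAux

open Finset

private lemma negAddFinset {p : ℕ} (s t : Finset (ZMod p)) : -(s + t) = -s + -t := by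
  ext z; simp only [Finset.mem_neg, Finset.mem_add]
  constructor
  · rintro ⟨y, ⟨a, ha, b, hb, rfl⟩, rfl⟩
    exact ⟨-a, ⟨a, ha, rfl⟩, -b, ⟨b, hb, rfl⟩, (neg_add a b).symm⟩
  · rintro ⟨a', ⟨a, ha, rfl⟩, b', ⟨b, hb, rfl⟩, rfl⟩
    exact ⟨a + b, ⟨a, ha, b, hb, rfl⟩, neg_add a b⟩

private lemma key_base (p : ℕ) (hp : p.Prime)
    (B : Finset (ZMod p)) (h0B : (0 : ZMod p) ∈ B)
    (A : Finset (ZMod p)) (hA : IsAtom' p 2 B A) (h0A : (0 : ZMod p) ∈ A)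
    (hAcard : 3 ≤ A.card) :
    ∀ x : ZMod p, x ∈ B + itSum p A 2 → x ∉ B + itSum p A 1 →
      ∀ a ∈ A, a ≠ 0 → x - a ∈ B + itSum p A 1 := by
  haveI : NeZero p := ⟨hp.pos.ne'⟩
  obtain ⟨⟨hA2, hABle, hABκ⟩, hmin⟩ := hA
  set κ := kappa p 2 B with hκdef
  set C : Finset (ZMod p) := -B with hCdef
  have h0C : (0 : ZMod p) ∈ C := by
    rw [hCdef, Finset.mem_neg]; exact ⟨0, h0B, neg_zero⟩
  have h1A : itSum p A 1 = A := by
    ext z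
    show z ∈ ({0} : Finset (ZMod p)) + A ↔ z ∈ A
    constructor
    · intro h
      rcases Finset.mem_add.mp h with ⟨u, hu, b, hb, rfl⟩
      rw [Finset.mem_singleton.mp hu, zero_add]; exact hb
    · intro h
      exact Finset.mem_add.mpr ⟨0, Finset.mem_singleton_self 0, z, h, zero_add z⟩
  have S1eq : B + itSum p A 1 = A + B := by rw [h1A, add_comm]
  have S2eq : B + itSum p A 2 = (B + itSum p A 1) + A :=
    (add_assoc B (itSum p A 1) A).symm
  have hsubAB : A ⊆ A + B := by
    intro a ha; exact Finset.mem_add.mpr ⟨a, ha, 0, h0B, add_zero a⟩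
  have hABcard : (A + B).card = A.card + κ := by
    have := Finset.card_le_card hsubAB; omega
  have hp2 : 2 ≤ p := hp.two_le
  have hABp : (A + B).card ≤ p := by
    have := Finset.card_le_univ (A + B); rwa [ZMod.card p] at this
  have hple : A.card + κ + 2 ≤ p := by omega
  -- κ as an infimum
  have hκB : κ = sInf {n : ℕ | ∃ X : Finset (ZMod p),
      2 ≤ X.card ∧ (X + B).card ≤ p - 2 ∧ (X + B).card - X.card = n} := by
    rw [hκdef]; unfold kappa
    rw [if_pos ⟨(A + B).card - A.card, A, hA2, hABle, rfl⟩]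
  have hcardnegB : ∀ X : Finset (ZMod p), ((-X) + B).card = (X + C).card := by
    intro X
    have : -(X + C) = (-X) + B := by
      rw [negAddFinset, hCdef]; congr 1; simp
    rw [← this, Finset.card_neg]
  have hcardnegC : ∀ X : Finset (ZMod p), ((-X) + C).card = (X + B).card := by
    intro X
    have : -(X + B) = (-X) + C := by rw [negAddFinset, hCdef]
    rw [← this, Finset.card_neg]
  have hκC : kappa p 2 C = κ := by
    have hsetseq : {n : ℕ | ∃ X : Finset (ZMod p),
        2 ≤ X.card ∧ (X + C).card ≤ p - 2 ∧ (X + C).card - X.card = n}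
        = {n : ℕ | ∃ X : Finset (ZMod p),
        2 ≤ X.card ∧ (X + B).card ≤ p - 2 ∧ (X + B).card - X.card = n} := by
      ext n; simp only [Set.mem_setOf_eq]
      constructor
      · rintro ⟨X, h1, h2, h3⟩
        refine ⟨-X, by rwa [Finset.card_neg], ?_, ?_⟩
        · rwa [hcardnegB X]
        · rw [hcardnegB X, Finset.card_neg]; exact h3
      · rintro ⟨X, h1, h2, h3⟩
        refine ⟨-X, by rwa [Finset.card_neg], ?_, ?_⟩
        · rwa [hcardnegC X]
        · rw [hcardnegC X, Finset.card_neg]; exact h3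
    unfold kappa
    rw [hsetseq]
    rw [if_pos ⟨(A + B).card - A.card, A, hA2, hABle, rfl⟩]
    rw [hκB]
  -- lower bound for the boundary w.r.t. C
  have lbC : ∀ X : Finset (ZMod p), 2 ≤ X.card → (X + C).card ≤ p - 2 →
      κ + X.card ≤ (X + C).card := by
    intro X h1 h2
    have hXsub : X ⊆ X + C := by
      intro x hx; exact Finset.mem_add.mpr ⟨x, hx, 0, h0C, add_zero x⟩
    have hXle := Finset.card_le_card hXsub
    have hmem : (X + C).card - X.card ∈ {n : ℕ | ∃ X : Finset (ZMod p),
        2 ≤ X.card ∧ (X + C).card ≤ p - 2 ∧ (X + C).card - X.card = n} :=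
      ⟨X, h1, h2, rfl⟩
    have hinf := Nat.sInf_le hmem
    have : kappa p 2 C = sInf {n : ℕ | ∃ X : Finset (ZMod p),
        2 ≤ X.card ∧ (X + C).card ≤ p - 2 ∧ (X + C).card - X.card = n} := by
      unfold kappa
      rw [if_pos ⟨(X + C).card - X.card, X, h1, h2, rfl⟩]
    rw [← this, hκC] at hinf
    omega
  -- minimality transferred to fragments of C
  have minlem : ∀ X : Finset (ZMod p), 2 ≤ X.card → (X + C).card ≤ p - 2 →
      (X + C).card = X.card + κ → A.card ≤ X.card := by
    intro X h1 h2 h3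
    have hfrag : IsFragment p 2 B (-X) := by
      refine ⟨by rwa [Finset.card_neg], ?_, ?_⟩
      · rwa [hcardnegB X]
      · rw [hcardnegB X, Finset.card_neg, h3, ← hκdef]; omega
    have := hmin (-X) hfrag
    rwa [Finset.card_neg] at this
  -- the fragment F = (A+B)ᶜ of C
  set F : Finset (ZMod p) := (A + B)ᶜ with hFdef
  have hFcard : F.card = p - (A.card + κ) := by
    rw [hFdef, Finset.card_compl, ZMod.card, hABcard]
  have hFC_sub : F + C ⊆ Aᶜ := by
    intro z hz
    rcases Finset.mem_add.mp hz with ⟨f, hf, c, hc, rfl⟩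
    rw [hCdef] at hc
    rcases Finset.mem_neg.mp hc with ⟨b, hb, rfl⟩
    rw [Finset.mem_compl]
    intro hzA
    exact (Finset.mem_compl.mp hf)
      (Finset.mem_add.mpr ⟨f + -b, hzA, b, hb, by ring⟩)
  have hAc_card : (Aᶜ : Finset (ZMod p)).card = p - A.card := by
    rw [Finset.card_compl, ZMod.card]
  have hFCle : (F + C).card ≤ p - A.card := by
    have := Finset.card_le_card hFC_sub; omega
  have hF2 : 2 ≤ F.card := by omega
  have hFCle2 : (F + C).card ≤ p - 2 := by omega
  have hFCcard : (F + C).card = F.card + κ := by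
    have := lbC F hF2 hFCle2; omega
  -- main argument
  intro x hx2 hx1 a haA ha0
  by_contra hcon
  have hxF : x ∈ F := by
    rw [hFdef, Finset.mem_compl, ← S1eq]; exact hx1
  have hxaF : x - a ∈ F := by
    rw [hFdef, Finset.mem_compl, ← S1eq]; exact hcon
  set T : Finset (ZMod p) := {x} + (-A) with hTdef
  have hTmem : ∀ b ∈ A, x - b ∈ T := by
    intro b hb
    rw [hTdef]
    exact Finset.mem_add.mpr ⟨x, Finset.mem_singleton_self x,
      -b, Finset.mem_neg.mpr ⟨b, hb, rfl⟩, (sub_eq_add_neg x b).symm⟩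
  have hTcard : T.card = A.card := by
    rw [hTdef, Finset.singleton_add, Finset.card_vadd_finset, Finset.card_neg]
  have hTC : T + C = {x} + (-(A + B)) := by
    rw [hTdef, hCdef, add_assoc, negAddFinset]
  have hTCcard : (T + C).card = A.card + κ := by
    rw [hTC, Finset.singleton_add, Finset.card_vadd_finset, Finset.card_neg, hABcard]
  have hTCle : (T + C).card ≤ p - 2 := by omega
  have hxT : x ∈ T := by
    have := hTmem 0 h0A; rwa [sub_zero] at this
  have hxaT : x - a ∈ T := hTmem a haA
  have hpair : 2 ≤ (T ∩ F).card := by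
    have hne : x ≠ x - a := by
      intro h
      exact ha0 (by
        have : x - a = x := h.symm
        rwa [sub_eq_self] at this)
    have hsub2 : ({x, x - a} : Finset (ZMod p)) ⊆ T ∩ F := by
      intro z hz
      rcases Finset.mem_insert.mp hz with rfl | hz
      · exact Finset.mem_inter.mpr ⟨hxT, hxF⟩
      · rw [Finset.mem_singleton.mp hz]
        exact Finset.mem_inter.mpr ⟨hxaT, hxaF⟩
    calc 2 = ({x, x - a} : Finset (ZMod p)).card := (Finset.card_pair hne).symm
      _ ≤ (T ∩ F).card := Finset.card_le_card hsub2
  -- submodularity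
  have hunion : (T ∪ F) + C = (T + C) ∪ (F + C) := Finset.union_add
  have hinter_sub : (T ∩ F) + C ⊆ (T + C) ∩ (F + C) := by
    intro z hz
    rcases Finset.mem_add.mp hz with ⟨w, hw, c, hc, rfl⟩
    exact Finset.mem_inter.mpr
      ⟨Finset.mem_add.mpr ⟨w, (Finset.mem_inter.mp hw).1, c, hc, rfl⟩,
       Finset.mem_add.mpr ⟨w, (Finset.mem_inter.mp hw).2, c, hc, rfl⟩⟩
  have h1 : ((T ∩ F) + C).card + ((T ∪ F) + C).card ≤ (T + C).card + (F + C).card := by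
    have hcui := Finset.card_inter_add_card_union (T + C) (F + C)
    have hi := Finset.card_le_card hinter_sub
    have hu : ((T ∪ F) + C).card = ((T + C) ∪ (F + C)).card := by rw [hunion]
    omega
  have h2 : (T ∩ F).card + (T ∪ F).card = T.card + F.card :=
    Finset.card_inter_add_card_union T F
  have hintCle : ((T ∩ F) + C).card ≤ p - 2 := by
    have h' := Finset.card_le_card
      (Finset.add_subset_add_right (t := C) (Finset.inter_subset_left : T ∩ F ⊆ T))
    omega
  have h3 : κ + (T ∩ F).card ≤ ((T ∩ F) + C).card := lbC _ hpair hintCle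
  have hTU2 : 2 ≤ (T ∪ F).card := by
    have := Finset.card_le_card (Finset.subset_union_left : T ⊆ T ∪ F)
    omega
  have h4 : κ + (T ∪ F).card ≤ ((T ∪ F) + C).card := by
    by_cases hs : ((T ∪ F) + C).card ≤ p - 2
    · exact lbC _ hTU2 hs
    · omega
  have hint_eq : ((T ∩ F) + C).card = (T ∩ F).card + κ := by omega
  have hAle : A.card ≤ (T ∩ F).card := minlem _ hpair hintCle hint_eq
  have hTF : T ∩ F = T :=
    Finset.eq_of_subset_of_card_le (Finset.inter_subset_left) (by omega)
  have hTsubF : T ⊆ F := by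
    rw [← hTF]; exact Finset.inter_subset_right
  -- contradiction
  rw [S2eq] at hx2
  rcases Finset.mem_add.mp hx2 with ⟨y, hy, a₁, ha₁, hxy⟩
  have hyT : x - a₁ ∈ T := hTmem a₁ ha₁
  have : x - a₁ ∈ F := hTsubF hyT
  rw [hFdef, Finset.mem_compl] at this
  apply this
  rw [← S1eq]
  have heq : x - a₁ = y := by rw [← hxy]; ring
  rwa [heq]

end StatementFourAux

theorem statement_4 (p : ℕ) (hp : p.Prime)
    (B : Finset (ZMod p)) (h0B : (0 : ZMod p) ∈ B) (hB : 3 ≤ B.card)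
    (A : Finset (ZMod p)) (hA : IsAtom' p 2 B A) (h0A : (0 : ZMod p) ∈ A)
    (hAcard : 3 ≤ A.card) :
    ∀ i : ℕ, 1 ≤ i → Nset p B A (i + 1) - (A \ {0}) ⊆ Nset p B A i := by
  have key : ∀ m : ℕ, ∀ x : ZMod p, x ∈ B + itSum p A (m + 2) →
      x ∉ B + itSum p A (m + 1) →
      ∀ a ∈ A, a ≠ 0 → x - a ∈ B + itSum p A (m + 1) := by
    intro m
    induction m with
    | zero => exact key_base p hp B h0B A hA h0A hAcard
    | succ n ih =>
      intro x hx2 hx1 a haA ha0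
      have hS3 : B + itSum p A (n + 3) = (B + itSum p A (n + 2)) + A :=
        (add_assoc B (itSum p A (n + 2)) A).symm
      have hS2 : B + itSum p A (n + 2) = (B + itSum p A (n + 1)) + A :=
        (add_assoc B (itSum p A (n + 1)) A).symm
      rw [show n + 1 + 2 = n + 3 from rfl, hS3] at hx2
      rcases Finset.mem_add.mp hx2 with ⟨y, hy, a', ha', hxy⟩
      have hynot : y ∉ B + itSum p A (n + 1) := by
        intro hy'
        apply hx1
        rw [show n + 1 + 1 = n + 2 from rfl, hS2, ← hxy]
        exact Finset.mem_add.mpr ⟨y, hy', a', ha', rfl⟩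
      have hya := ih y hy hynot a haA ha0
      have hxa : x - a = (y - a) + a' := by rw [← hxy]; ring
      rw [show n + 1 + 1 = n + 2 from rfl, hS2, hxa]
      exact Finset.mem_add.mpr ⟨y - a, hya, a', ha', rfl⟩
  intro i hi x hx
  rcases Finset.mem_sub.mp hx with ⟨z, hz, a, ha, rfl⟩
  obtain ⟨m, rfl⟩ : ∃ m, i = m + 1 := ⟨i - 1, by omega⟩
  have hz' : z ∈ (B + itSum p A (m + 2)) \ (B + itSum p A (m + 1)) := hz
  rcases Finset.mem_sdiff.mp hz' with ⟨hz2, hz1⟩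
  rcases Finset.mem_sdiff.mp ha with ⟨haA, ha0'⟩
  have ha0 : a ≠ 0 := by simpa using ha0'
  have h1 := key m z hz2 hz1 a haA ha0
  show z - a ∈ (B + itSum p A (m + 1)) \ (B + itSum p A m)
  refine Finset.mem_sdiff.mpr ⟨h1, ?_⟩
  intro hmem
  apply hz1
  have hS : B + itSum p A (m + 1) = (B + itSum p A m) + A :=
    (add_assoc B (itSum p A m) A).symm
  rw [hS]
  exact Finset.mem_add.mpr ⟨z - a, hmem, a, haA, by ring⟩
end

section
/- Let p be a prime, let X be a nonempty subset of ℤ/pℤ generating ℤ/pℤ, let k be a positive integer, and let A be a k-atom of X. If there exists z ∈ X+A that can be written in exactly one way as z = x + a with x ∈ X and a ∈ A, then |A| = k. -/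
open Pointwise

theorem statement_12 (p : ℕ) (hp : p.Prime)
    (X : Finset (ZMod p)) (hX : X.Nonempty)
    (hgen : AddSubgroup.closure (X : Set (ZMod p)) = ⊤)
    (k : ℕ) (hk : 1 ≤ k)
    (A : Finset (ZMod p)) (hA : IsAtom' p k X A)
    (huniq : ∃ z ∈ X + A, ∃! xa : ZMod p × ZMod p,
      xa.1 ∈ X ∧ xa.2 ∈ A ∧ z = xa.1 + xa.2) :
    A.card = k := by
  classical
  obtain ⟨z, hz, ⟨⟨x, a⟩, ⟨hx, ha, hzeq⟩, huni⟩⟩ := huniq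
  obtain ⟨⟨hkA, hXA, hkap⟩, hmin⟩ := hA
  by_contra hne
  have hAgt : k + 1 ≤ A.card := lt_of_le_of_ne hkA (Ne.symm hne)
  set A' := A.erase a with hA'def
  have hcard' : A'.card = A.card - 1 := Finset.card_erase_of_mem ha
  have hsub : X + A' ⊆ (X + A).erase z := by
    intro w hw
    obtain ⟨x', hx', a', ha', rfl⟩ := Finset.mem_add.1 hw
    have ha'A : a' ∈ A := Finset.mem_of_mem_erase ha'
    refine Finset.mem_erase.2 ⟨?_, Finset.add_mem_add hx' ha'A⟩
    intro hcontra
    have heq := huni (x', a') ⟨hx', ha'A, hcontra.symm⟩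
    have : a' = a := congrArg Prod.snd heq
    exact (Finset.mem_erase.1 ha').1 this
  have hcardXA' : (X + A').card ≤ (X + A).card - 1 := by
    have := Finset.card_le_card hsub
    rwa [Finset.card_erase_of_mem hz] at this
  have hcomm : A + X = X + A := add_comm A X
  have hcomm' : A' + X = X + A' := add_comm A' X
  have hk' : k ≤ A'.card := by omega
  have hXA'le : (A' + X).card ≤ p - k := by
    rw [hcomm']
    exact le_trans (le_trans hcardXA' (Nat.sub_le _ _)) (by rwa [hcomm] at hXA)
  set S := {n : ℕ | ∃ Y : Finset (ZMod p),
      k ≤ Y.card ∧ (Y + X).card ≤ p - k ∧ (Y + X).card - Y.card = n} with hSdef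
  have hSne : S.Nonempty := ⟨(A + X).card - A.card, A, hkA, hXA, rfl⟩
  have hkapS : kappa p k X = sInf S := by
    rw [kappa, if_pos hSne]
  have hm : (A' + X).card - A'.card ∈ S := ⟨A', hk', hXA'le, rfl⟩
  have h1 : kappa p k X ≤ (A' + X).card - A'.card := hkapS ▸ Nat.sInf_le hm
  have h2 : (A' + X).card - A'.card ≤ kappa p k X := by
    rw [← hkap, hcomm, hcomm']
    have h1 : 1 ≤ A.card := by omega
    omega
  have hfrag : IsFragment p k X A' := ⟨hk', hXA'le, le_antisymm h2 h1⟩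
  have := hmin A' hfrag
  omega
end

section
/- Let p be an odd prime and let Z ⊆ ℤ/pℤ with 0 ∈ Z and |Z| < (p+9)/4. If c_d(Z) ≤ 2 for some nonzero d ∈ ℤ/pℤ, then there exist u, v ∈ ℤ/pℤ with u ≠ 0 such that u·Z + v ⊆ {0, 1, …, (p−1)/2} (the image in ℤ/pℤ of the integers 0 through (p−1)/2). -/
open Pointwise

/-!
After the change of variables `z ↦ d⁻¹ (z - a)`, a set with at most two `d`-components is
the union of two disjoint intervals `[0, m)` and `[t, t + n)` of `ℤ/pℤ`, with
`m + n ≤ |Z| < (p + 9) / 4`. If one of the two gaps `t - m`, `p - t - n` between them has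
length at least `(p - 1) / 2`, a translate of the set lies in `{0, …, (p - 1) / 2}`. Otherwise
`t` is close to `p / 2`, so doubling moves `2t` close to `0` and maps both intervals into a single
arc of length at most `(p + 1) / 2`.
-/

open Finset

section Components

variable {p : ℕ} {d : ZMod p} {Z C C' : Finset (ZMod p)}

lemma exists_isComponent_mem (d : ZMod p) {z : ZMod p} (hz : z ∈ Z) :
    ∃ C, IsComponent p d Z C ∧ z ∈ C := by
  classical
  set S := Z.powerset.filter fun C => IsAP p d C ∧ z ∈ C
  have hzS : {z} ∈ S := by
    simp only [S, mem_filter, mem_powerset, singleton_subset_iff, mem_singleton, and_true]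
    exact ⟨hz, z, 1, by simp⟩
  obtain ⟨C, hCS, hmax⟩ := S.exists_max_image card ⟨_, hzS⟩
  simp only [S, mem_filter, mem_powerset] at hCS
  obtain ⟨hCZ, hC, hzC⟩ := hCS
  refine ⟨C, ⟨⟨z, hzC⟩, hC, hCZ, fun C' hC' hC'Z hCC' => ?_⟩, hzC⟩
  have hC'S : C' ∈ S := by
    simp only [S, mem_filter, mem_powerset]
    exact ⟨hC'Z, hC', hCC' hzC⟩
  exact (eq_of_subset_of_card_le hCC' (hmax C' hC'S)).symm

lemma image_range_union_image_range_shift (a d : ZMod p) {m s : ℕ} (n : ℕ) (hs : s ≤ m) :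
    (range m).image (fun i => a + i • d) ∪ (range n).image (fun j => (a + s • d) + j • d) =
      (range (max m (s + n))).image (fun i => a + i • d) := by
  ext y
  simp only [mem_union, mem_image, mem_range]
  constructor
  · rintro (⟨i, hi, rfl⟩ | ⟨j, hj, rfl⟩)
    · exact ⟨i, by omega, rfl⟩
    · exact ⟨s + j, by omega, by rw [add_nsmul, add_assoc]⟩
  · rintro ⟨i, hi, rfl⟩
    by_cases him : i < m
    · exact Or.inl ⟨i, him, rfl⟩
    · refine Or.inr ⟨i - s, by omega, ?_⟩
      rw [add_assoc, ← add_nsmul, Nat.add_sub_cancel' (by omega)]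

lemma IsAP.union_of_mem {x : ZMod p} (hC : IsAP p d C) (hC' : IsAP p d C') (hx : x ∈ C)
    (hx' : x ∈ C') : IsAP p d (C ∪ C') := by
  obtain ⟨a, m, rfl⟩ := hC
  obtain ⟨a', n, rfl⟩ := hC'
  obtain ⟨i, hi, hxi⟩ := mem_image.1 hx
  obtain ⟨j, hj, hxj⟩ := mem_image.1 hx'
  wlog hji : j ≤ i generalizing a a' m n i j
  · rw [union_comm]
    exact this (a := a') (a' := a) (m := n) (n := m) (i := j) (j := i) hx' hx hj hxj hi hxi
      (by omega)
  have ha' : a' = a + (i - j) • d := by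
    refine add_right_cancel (b := j • d) ?_
    rw [hxj, add_assoc, ← add_nsmul, Nat.sub_add_cancel hji, hxi]
  rw [ha', image_range_union_image_range_shift a d n (by rw [mem_range] at hi; omega)]
  exact ⟨a, _, rfl⟩

lemma IsComponent.eq_of_mem {x : ZMod p} (hC : IsComponent p d Z C)
    (hC' : IsComponent p d Z C') (hx : x ∈ C) (hx' : x ∈ C') : C = C' := by
  obtain ⟨-, hCAP, hCZ, hCmax⟩ := hC
  obtain ⟨-, hC'AP, hC'Z, hC'max⟩ := hC'
  have hU := hCAP.union_of_mem hC'AP hx hx'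
  have hUZ := union_subset hCZ hC'Z
  exact (hCmax _ hU hUZ subset_union_left).symm.trans (hC'max _ hU hUZ subset_union_right)

lemma subset_union_of_numComponents_le_two [NeZero p] (hc : numComponents p d Z ≤ 2)
    (hC : IsComponent p d Z C) (hC' : IsComponent p d Z C') (hne : C ≠ C') : Z ⊆ C ∪ C' := by
  intro z hz
  obtain ⟨C'', hC'', hzC''⟩ := exists_isComponent_mem d hz
  by_contra hzCC'
  have h₁ : C'' ≠ C := fun h => hzCC' (mem_union_left _ (h ▸ hzC''))
  have h₂ : C'' ≠ C' := fun h => hzCC' (mem_union_right _ (h ▸ hzC''))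
  have hsub : ({C, C', C''} : Set (Finset (ZMod p))) ⊆ {C | IsComponent p d Z C} := by
    rintro _ (rfl | rfl | rfl) <;> assumption
  have h₃ : ({C, C', C''} : Set (Finset (ZMod p))).ncard = 3 :=
    Set.ncard_eq_three.2 ⟨C, C', C'', hne, h₁.symm, h₂.symm, rfl⟩
  have := Set.ncard_le_ncard hsub
  unfold numComponents at hc
  omega

variable [Fact p.Prime]

lemma card_image_range_nsmul (a : ZMod p) (hd : d ≠ 0) {n : ℕ} (hn : n ≤ p) :
    ((range n).image (fun i => a + i • d)).card = n := by
  rw [card_image_of_injOn, card_range]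
  intro i hi j hj hij
  simp only [coe_range, Set.mem_Iio, nsmul_eq_mul, add_right_inj] at hi hj hij
  have := congrArg ZMod.val (mul_right_cancel₀ hd hij)
  rwa [ZMod.val_cast_of_lt (by omega), ZMod.val_cast_of_lt (by omega)] at this

lemma IsComponent.exists_eq_image_range (hd : d ≠ 0) (hZ : Z.card < p)
    (hC : IsComponent p d Z C) :
    ∃ a m, 1 ≤ m ∧ C = (range m).image (fun i => a + i • d) ∧ C.card = m := by
  obtain ⟨⟨x, hx⟩, ⟨a, m, rfl⟩, hCZ, -⟩ := hC
  have hCp := (card_le_card hCZ).trans_lt hZ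
  have hmp : m < p := by
    by_contra! hpm
    have := card_le_card
      (image_subset_image (f := fun i => a + i • d) (range_subset_range.2 hpm))
    rw [card_image_range_nsmul a hd le_rfl] at this
    omega
  obtain ⟨i, hi, -⟩ := mem_image.1 hx
  exact ⟨a, m, by rw [mem_range] at hi; omega, rfl, card_image_range_nsmul a hd hmp.le⟩

lemma exists_offset_of_disjoint (hd : d ≠ 0) (a b : ZMod p) {m n : ℕ} (hm : 1 ≤ m)
    (hn : 1 ≤ n) (hdisj : Disjoint ((range m).image (fun i => a + i • d))
      ((range n).image (fun j => b + j • d))) :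
    ∃ t, m ≤ t ∧ t + n ≤ p ∧ b = a + t • d := by
  set t := ((b - a) * d⁻¹).val
  have hb : b = a + t • d := by
    rw [nsmul_eq_mul, ZMod.natCast_zmod_val]
    field_simp
    ring
  have hb_mem : b ∈ (range n).image (fun j => b + j • d) :=
    mem_image.2 ⟨0, mem_range.2 hn, by simp⟩
  have ha_mem : a ∈ (range m).image (fun i => a + i • d) :=
    mem_image.2 ⟨0, mem_range.2 hm, by simp⟩
  refine ⟨t, ?_, ?_, hb⟩
  · by_contra! htm
    exact disjoint_left.1 hdisj (mem_image.2 ⟨t, mem_range.2 htm, hb.symm⟩) hb_mem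
  · by_contra! hpt
    have htp : t < p := ZMod.val_lt _
    refine disjoint_left.1 hdisj ha_mem (mem_image.2 ⟨p - t, mem_range.2 (by omega), ?_⟩)
    rw [hb, add_assoc, ← add_nsmul, Nat.add_sub_cancel' htp.le, nsmul_eq_mul, ZMod.natCast_self,
      zero_mul, add_zero]

lemma exists_two_intervals_of_numComponents_le_two (hd : d ≠ 0) (hZ : Z.card < p)
    (hc : numComponents p d Z ≤ 2) (hC : IsComponent p d Z C) (hZC : ¬Z ⊆ C) :
    ∃ a m n t, 1 ≤ m ∧ 1 ≤ n ∧ m ≤ t ∧ t + n ≤ p ∧ m + n ≤ Z.card ∧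
      ∀ z ∈ Z, ∃ k ∈ {k : ℕ | k < m ∨ t ≤ k ∧ k < t + n}, z = a + k • d := by
  obtain ⟨z, hz, hzC⟩ := not_subset.1 hZC
  obtain ⟨C', hC', hzC'⟩ := exists_isComponent_mem d hz
  have hne : C ≠ C' := fun h => hzC (h ▸ hzC')
  have hdisj : Disjoint C C' := disjoint_left.2 fun x hx hx' => hne (hC.eq_of_mem hC' hx hx')
  have hZU := subset_union_of_numComponents_le_two hc hC hC' hne
  have hmn := card_le_card (union_subset hC.2.2.1 hC'.2.2.1)
  rw [card_union_of_disjoint hdisj] at hmn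
  obtain ⟨a, m, hm, rfl, hCm⟩ := hC.exists_eq_image_range hd hZ
  obtain ⟨b, n, hn, rfl, hC'n⟩ := hC'.exists_eq_image_range hd hZ
  obtain ⟨t, hmt, htn, rfl⟩ := exists_offset_of_disjoint hd a b hm hn hdisj
  refine ⟨a, m, n, t, hm, hn, hmt, htn, hCm ▸ hC'n ▸ hmn, fun z hz => ?_⟩
  rcases mem_union.1 (hZU hz) with h | h
  · obtain ⟨k, hk, rfl⟩ := mem_image.1 h
    exact ⟨k, Or.inl (mem_range.1 hk), rfl⟩
  · obtain ⟨j, hj, rfl⟩ := mem_image.1 h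
    rw [mem_range] at hj
    exact ⟨t + j, Or.inr ⟨by omega, by omega⟩, by rw [add_nsmul, add_assoc]⟩

end Components

lemma exists_mul_add_congr_le_half {p m n t : ℕ} (hp : Odd p) (hm : 1 ≤ m) (hn : 1 ≤ n)
    (hmt : m ≤ t) (htn : t + n ≤ p) (hmn : 4 * (m + n) < p + 9) :
    ∃ u v : ℤ, 0 < u ∧ u < p ∧ ∀ k : ℕ, k < m ∨ t ≤ k ∧ k < t + n →
      ∃ q : ℤ, 0 ≤ u * k + v - q * p ∧ u * k + v - q * p ≤ ((p - 1) / 2 : ℕ) := by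
  obtain ⟨r, rfl⟩ := hp
  by_cases h₁ : t + n ≤ r + 1
  · exact ⟨1, 0, by omega, by omega, fun k hk => ⟨0, by omega, by omega⟩⟩
  by_cases h₂ : 2 * r + 1 - t + m ≤ r + 1
  · refine ⟨1, -t, by omega, by omega, ?_⟩
    rintro k (hk | hk)
    · exact ⟨-1, by omega, by omega⟩
    · exact ⟨0, by omega, by omega⟩
  by_cases h₃ : 2 * t < 2 * r + 1
  · refine ⟨2, -(2 * t), by omega, by omega, ?_⟩
    rintro k (hk | hk)
    · exact ⟨-1, by omega, by omega⟩
    · exact ⟨0, by omega, by omega⟩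
  · refine ⟨2, 0, by omega, by omega, ?_⟩
    rintro k (hk | hk)
    · exact ⟨0, by omega, by omega⟩
    · exact ⟨1, by omega, by omega⟩

def lowerHalf (p : ℕ) : Finset (ZMod p) :=
  (range ((p - 1) / 2 + 1)).image Nat.cast

lemma natCast_mem_lowerHalf {p k : ℕ} (hk : k ≤ (p - 1) / 2) : (k : ZMod p) ∈ lowerHalf p :=
  mem_image_of_mem _ (mem_range.2 (Nat.lt_succ_of_le hk))

lemma intCast_mem_lowerHalf {p : ℕ} {x q : ℤ} (h₀ : 0 ≤ x - q * p)
    (h₁ : x - q * p ≤ ((p - 1) / 2 : ℕ)) : (x : ZMod p) ∈ lowerHalf p := by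
  lift x - q * p to ℕ using h₀ with k hk
  have hx : (x : ZMod p) = k := by
    rw [← Int.cast_natCast, hk]
    simp
  exact hx ▸ natCast_mem_lowerHalf (by omega)

lemma intCast_ne_zero_of_pos_of_lt {p : ℕ} {u : ℤ} (h₀ : 0 < u) (h₁ : u < p) :
    (u : ZMod p) ≠ 0 := by
  rw [Ne, ZMod.intCast_zmod_eq_zero_iff_dvd]
  exact fun h => absurd (Int.le_of_dvd h₀ h) (by omega)

lemma exists_mul_add_mem_lowerHalf_of_two_intervals {p m n t : ℕ} (hp : Odd p) (hm : 1 ≤ m)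
    (hn : 1 ≤ n) (hmt : m ≤ t) (htn : t + n ≤ p) (hmn : 4 * (m + n) < p + 9) :
    ∃ u v : ZMod p, u ≠ 0 ∧
      ∀ k ∈ {k : ℕ | k < m ∨ t ≤ k ∧ k < t + n}, u * k + v ∈ lowerHalf p := by
  obtain ⟨u, v, hu₀, hup, hk⟩ := exists_mul_add_congr_le_half hp hm hn hmt htn hmn
  refine ⟨u, v, intCast_ne_zero_of_pos_of_lt hu₀ hup, fun k hkK => ?_⟩
  obtain ⟨q, hq₀, hq₁⟩ := hk k hkK
  exact_mod_cast intCast_mem_lowerHalf (p := p) hq₀ hq₁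

lemma exists_mul_add_mem_of_subset_progression {F : Type*} [Field F] {Z S : Finset F} {d : F}
    (hd : d ≠ 0) (a : F) (K : Set ℕ) (hZ : ∀ z ∈ Z, ∃ k ∈ K, z = a + k • d)
    (hK : ∃ u v : F, u ≠ 0 ∧ ∀ k ∈ K, u * k + v ∈ S) :
    ∃ u v : F, u ≠ 0 ∧ ∀ z ∈ Z, u * z + v ∈ S := by
  obtain ⟨u, v, hu, hS⟩ := hK
  refine ⟨u * d⁻¹, v - u * d⁻¹ * a, mul_ne_zero hu (inv_ne_zero hd), fun z hz => ?_⟩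
  obtain ⟨k, hk, rfl⟩ := hZ z hz
  convert hS k hk using 1
  rw [nsmul_eq_mul]
  field_simp
  ring

theorem statement_17 (p : ℕ) (hp : p.Prime) (hodd : Odd p)
    (Z : Finset (ZMod p)) (h0Z : (0 : ZMod p) ∈ Z)
    (hZcard : 4 * Z.card < p + 9)
    (hd : ∃ d : ZMod p, d ≠ 0 ∧ numComponents p d Z ≤ 2) :
    ∃ u v : ZMod p, u ≠ 0 ∧ ∀ z ∈ Z,
      u * z + v ∈ (Finset.range ((p - 1) / 2 + 1)).image (Nat.cast : ℕ → ZMod p) := by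
  show ∃ u v : ZMod p, u ≠ 0 ∧ ∀ z ∈ Z, u * z + v ∈ lowerHalf p
  have := Fact.mk hp
  obtain ⟨d, hd, hc⟩ := hd
  have hp₂ := Nat.odd_iff.1 hodd
  have hp₃ := hp.two_le
  have hZp : Z.card < p := by omega
  obtain ⟨C, hC, -⟩ := exists_isComponent_mem d h0Z
  by_cases hZC : Z ⊆ C
  · obtain ⟨a, m, -, rfl, hCm⟩ := hC.exists_eq_image_range hd hZp
    have hmZ : m ≤ Z.card := hCm ▸ card_le_card hC.2.2.1
    refine exists_mul_add_mem_of_subset_progression hd a {k | k < m} (fun z hz => ?_)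
      ⟨1, 0, one_ne_zero, fun k (hk : k < m) => ?_⟩
    · obtain ⟨k, hk, rfl⟩ := mem_image.1 (hZC hz)
      exact ⟨k, mem_range.1 hk, rfl⟩
    · rw [one_mul, add_zero]
      exact natCast_mem_lowerHalf (by omega)
  · obtain ⟨a, m, n, t, hm, hn, hmt, htn, hmn, hZ⟩ :=
      exists_two_intervals_of_numComponents_le_two hd hZp hc hC hZC
    exact exists_mul_add_mem_of_subset_progression hd a _ hZ
      (exists_mul_add_mem_lowerHalf_of_two_intervals hodd hm hn hmt htn (by omega))
end
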